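/- Let ε ∈ [0,1] and let (X_n)_{n≥0} be a stochastic process with values in A = {0,1,2} compatible with (τ_qua, p_qua), and suppose P(X_0 = 1, X_1 = 1) = 0 and P(X_1 = 1, X_2 = 1) = 0. Then almost surely (1/n)·|{1 ≤ m ≤ n : X_m = 2}| → 1/4 as n → ∞; that is, the asymptotic frequency of the symbol 2 in the Quaternary chain equals 1/4. -/

import Mathlib

open MeasureTheory

/-- The quaternary context tree τ_qua = {000, 100, 200, 10, 20, 01, 21, 2}, where the
string "01" denotes the list [0, 1]. -/
def tauQua : Finset (List (Fin 3)) :=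
  {[0,0,0], [1,0,0], [2,0,0], [1,0], [2,0], [0,1], [2,1], [2]}

/-- The family of transition probabilities p_qua of the Quaternary chain:
p(0|2) = ε, p(1|2) = 1−ε; p(0|21) = 1; p(0|20) = 1; p(0|10) = ε, p(1|10) = 1−ε;
p(2|01) = 1; p(0|200) = ε, p(1|200) = 1−ε; p(2|100) = 1; p(2|000) = 1
(all unlisted entries are 0). -/
noncomputable def pQua (ε : ℝ) (w : List (Fin 3)) (a : Fin 3) : ℝ :=
  if w = [2] then (if a = 0 then ε else if a = 1 then 1 - ε else 0)
  else if w = [2,1] then (if a = 0 then 1 else 0)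
  else if w = [2,0] then (if a = 0 then 1 else 0)
  else if w = [1,0] then (if a = 0 then ε else if a = 1 then 1 - ε else 0)
  else if w = [0,1] then (if a = 2 then 1 else 0)
  else if w = [2,0,0] then (if a = 0 then ε else if a = 1 then 1 - ε else 0)
  else if w = [1,0,0] then (if a = 2 then 1 else 0)
  else if w = [0,0,0] then (if a = 2 then 1 else 0)
  else 0

/-- A stochastic process (X_n) with values in {0,1,2} is compatible with
(τ_qua, p_qua): for every n ≥ 3 and every string x_0⋯x_{n-1} with
P(X_0 = x_0, …, X_{n-1} = x_{n-1}) > 0 and such that the context c(x_0⋯x_{n-1}) is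
defined (i.e. the last two symbols are not (1,1)), one has
P(X_n = a | X_0 = x_0, …, X_{n-1} = x_{n-1}) = p_qua(a | c(x_0⋯x_{n-1})) for all a. -/
def CompatibleQua {Ω : Type*} [MeasurableSpace Ω] (μ : Measure Ω)
    (X : ℕ → Ω → Fin 3) (ε : ℝ) (c : List (Fin 3) → List (Fin 3)) : Prop :=
  ∀ n : ℕ, 3 ≤ n → ∀ x : ℕ → Fin 3,
    ¬ ([1,1] <:+ (List.range n).map x) →
    0 < μ {ω | ∀ i < n, X i ω = x i} →
    ∀ a : Fin 3,
      μ ({ω | X n ω = a} ∩ {ω | ∀ i < n, X i ω = x i}) =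
        ENNReal.ofReal (pQua ε (c ((List.range n).map x)) a) *
          μ {ω | ∀ i < n, X i ω = x i}

def allowedQ (p q r a : Fin 3) : Prop :=
  (r = 2 → a ≠ 2) ∧
  (r = 1 → q = 0 → a = 2) ∧
  (r = 1 → q = 2 → a = 0) ∧
  (r = 0 → q = 1 → a ≠ 2) ∧
  (r = 0 → q = 2 → a = 0) ∧
  (r = 0 → q = 0 → p = 2 → a ≠ 2) ∧
  (r = 0 → q = 0 → p ≠ 2 → a = 2)

instance (p q r a : Fin 3) : Decidable (allowedQ p q r a) := by
  unfold allowedQ; infer_instance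

lemma al1 : ∀ p q r a : Fin 3, r = 2 → a ≠ 2 → allowedQ p q r a := by decide
lemma al2 : ∀ p q r a : Fin 3, q = 2 → r = 1 → a = 0 → allowedQ p q r a := by decide
lemma al3 : ∀ p q r a : Fin 3, q = 2 → r = 0 → a = 0 → allowedQ p q r a := by decide
lemma al4 : ∀ p q r a : Fin 3, q = 1 → r = 0 → a ≠ 2 → allowedQ p q r a := by decide
lemma al5 : ∀ p q r a : Fin 3, q = 0 → r = 1 → a = 2 → allowedQ p q r a := by decide
lemma al6 : ∀ p q r a : Fin 3, p = 2 → q = 0 → r = 0 → a ≠ 2 → allowedQ p q r a := by decide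
lemma al7 : ∀ p q r a : Fin 3, p = 1 → q = 0 → r = 0 → a = 2 → allowedQ p q r a := by decide
lemma al8 : ∀ p q r a : Fin 3, p = 0 → q = 0 → r = 0 → a = 2 → allowedQ p q r a := by decide

lemma range_decomp (k : ℕ) : List.range (k+3) = List.range k ++ [k, k+1, k+2] := by
  simp [List.range_succ, List.append_assoc]

lemma suffix3 {α : Type*} {s A : List α} {a b c : α}
    (hs : s <:+ A ++ [a, b, c]) (hlen : s.length ≤ 3) : s <:+ [a, b, c] := by
  rcases List.suffix_or_suffix_of_suffix hs (List.suffix_append A [a,b,c]) with h | h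
  · exact h
  · have := h.eq_of_length (by have := h.length_le; simp at this ⊢; omega)
    rw [this]

lemma single_suffix {α : Type*} {a b c x : α} (h : [x] <:+ [a,b,c]) : x = c := by
  have h2 : [c] <:+ [a,b,c] := ⟨[a,b], rfl⟩
  rcases List.suffix_or_suffix_of_suffix h h2 with h3 | h3 <;>
    · have := h3.eq_of_length (by simp); simp_all

lemma pair_suffix {α : Type*} {a b c x y : α} (h : [x,y] <:+ [a,b,c]) : x = b ∧ y = c := by
  have h2 : [b,c] <:+ [a,b,c] := ⟨[a], rfl⟩
  rcases List.suffix_or_suffix_of_suffix h h2 with h3 | h3 <;>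
    · have := h3.eq_of_length (by simp); simp_all

lemma triple_suffix {α : Type*} {a b c x y z : α} (h : [x,y,z] <:+ [a,b,c]) :
    x = a ∧ y = b ∧ z = c := by
  have := h.eq_of_length (by simp); simp_all

lemma map_decomp (y : ℕ → Fin 3) (k : ℕ) :
    (List.range (k+3)).map y = (List.range k).map y ++ [y k, y (k+1), y (k+2)] := by
  rw [range_decomp]; simp

lemma suffix11_iff (y : ℕ → Fin 3) (k : ℕ) :
    [1,1] <:+ (List.range (k+3)).map y ↔ (y (k+1) = 1 ∧ y (k+2) = 1) := by
  rw [map_decomp]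
  constructor
  · intro h
    obtain ⟨h1, h2⟩ := pair_suffix (suffix3 h (by simp))
    exact ⟨h1.symm, h2.symm⟩
  · rintro ⟨h1, h2⟩
    exact ⟨(List.range k).map y ++ [y k], by simp [h1, h2]⟩

lemma stepAllowed (ε : ℝ) (c : List (Fin 3) → List (Fin 3))
    (hc : ∀ v : List (Fin 3), 3 ≤ v.length → ¬ ([1,1] <:+ v) → c v ∈ tauQua ∧ c v <:+ v)
    (y : ℕ → Fin 3) (h11 : ∀ j, ¬(y j = 1 ∧ y (j + 1) = 1))
    (hp : ∀ n, 3 ≤ n → pQua ε (c ((List.range n).map y)) (y n) ≠ 0) (k : ℕ) :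
    allowedQ (y k) (y (k+1)) (y (k+2)) (y (k+3)) := by
  have hns : ¬ [1,1] <:+ (List.range (k+3)).map y := by
    rw [suffix11_iff]; exact h11 (k+1)
  obtain ⟨hmem, hsufl⟩ := hc ((List.range (k+3)).map y)
    (by rw [List.length_map, List.length_range]; omega) hns
  have hpk := hp (k+3) (by omega)
  obtain ⟨a, ha⟩ : ∃ a, y (k+3) = a := ⟨_, rfl⟩
  rw [ha] at hpk
  rw [ha]
  generalize hgen : c ((List.range (k+3)).map y) = w at hmem hsufl hpk
  rw [map_decomp] at hsufl
  simp only [tauQua, Finset.mem_insert, Finset.mem_singleton] at hmem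
  rcases hmem with h | h | h | h | h | h | h | h
  · rw [h] at hsufl hpk
    obtain ⟨e1, e2, e3⟩ := triple_suffix (suffix3 hsufl (by simp))
    exact al8 _ _ _ _ e1.symm e2.symm e3.symm
      (by by_contra hne; exact hpk (by simp [pQua, hne]))
  · rw [h] at hsufl hpk
    obtain ⟨e1, e2, e3⟩ := triple_suffix (suffix3 hsufl (by simp))
    exact al7 _ _ _ _ e1.symm e2.symm e3.symm
      (by by_contra hne; exact hpk (by simp [pQua, hne]))
  · rw [h] at hsufl hpk
    obtain ⟨e1, e2, e3⟩ := triple_suffix (suffix3 hsufl (by simp))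
    exact al6 _ _ _ _ e1.symm e2.symm e3.symm
      (by intro h2; rw [h2] at hpk; exact hpk (by simp [pQua]))
  · rw [h] at hsufl hpk
    obtain ⟨e1, e2⟩ := pair_suffix (suffix3 hsufl (by simp))
    exact al4 _ _ _ _ e1.symm e2.symm
      (by intro h2; rw [h2] at hpk; exact hpk (by simp [pQua]))
  · rw [h] at hsufl hpk
    obtain ⟨e1, e2⟩ := pair_suffix (suffix3 hsufl (by simp))
    exact al3 _ _ _ _ e1.symm e2.symm
      (by by_contra hne; exact hpk (by simp [pQua, hne]))
  · rw [h] at hsufl hpk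
    obtain ⟨e1, e2⟩ := pair_suffix (suffix3 hsufl (by simp))
    exact al5 _ _ _ _ e1.symm e2.symm
      (by by_contra hne; exact hpk (by simp [pQua, hne]))
  · rw [h] at hsufl hpk
    obtain ⟨e1, e2⟩ := pair_suffix (suffix3 hsufl (by simp))
    exact al2 _ _ _ _ e1.symm e2.symm
      (by by_contra hne; exact hpk (by simp [pQua, hne]))
  · rw [h] at hsufl hpk
    have e1 := single_suffix (suffix3 hsufl (by simp))
    exact al1 _ _ _ _ e1.symm
      (by intro h2; rw [h2] at hpk; exact hpk (by simp [pQua]))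

lemma d2aux : ∀ p q r s t u v : Fin 3, r = 2 →
    allowedQ p q r s → allowedQ q r s t → allowedQ r s t u → allowedQ s t u v →
    s ≠ 2 ∧ t ≠ 2 ∧ u ≠ 2 ∧ v = 2 := by decide

lemma d1aux : ∀ a b c d e f : Fin 3, ¬(b = 1 ∧ c = 1) →
    allowedQ a b c d → allowedQ b c d e → allowedQ c d e f →
    (c = 2 ∨ d = 2 ∨ e = 2 ∨ f = 2) := by decide

lemma buildIff (y : ℕ → Fin 3)
    (hD2 : ∀ j, y (j+2) = 2 → y (j+3) ≠ 2 ∧ y (j+4) ≠ 2 ∧ y (j+5) ≠ 2 ∧ y (j+6) = 2)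
    (m : ℕ) (hm2 : 2 ≤ m) (hym : y m = 2) :
    ∀ j, m ≤ j → (y j = 2 ↔ (j - m) % 4 = 0) := by
  have step : ∀ b, 2 ≤ b → y b = 2 →
      y (b+1) ≠ 2 ∧ y (b+2) ≠ 2 ∧ y (b+3) ≠ 2 ∧ y (b+4) = 2 := by
    intro b hb hyb
    have h1 : b - 2 + 2 = b := by omega
    have h := hD2 (b - 2) (by rw [h1]; exact hyb)
    rw [show b - 2 + 3 = b + 1 by omega, show b - 2 + 4 = b + 2 by omega,
        show b - 2 + 5 = b + 3 by omega, show b - 2 + 6 = b + 4 by omega] at h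
    exact h
  have hfwd : ∀ k, y (m + 4 * k) = 2 := by
    intro k; induction k with
    | zero => simpa using hym
    | succ k ih =>
      have h := (step (m + 4 * k) (by omega) ih).2.2.2
      rw [show m + 4*k + 4 = m + 4*(k+1) by ring] at h; exact h
  intro j hj
  constructor
  · intro hyj
    by_contra hmod
    set k := (j - m) / 4 with hk
    have hs := step (m + 4 * k) (by omega) (hfwd k)
    have hr : (j-m) % 4 = 1 ∨ (j-m)%4 = 2 ∨ (j-m)%4 = 3 := by omega
    rcases hr with h | h | h
    · exact hs.1 (by rw [show m+4*k+1 = j by omega]; exact hyj)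
    · exact hs.2.1 (by rw [show m+4*k+2 = j by omega]; exact hyj)
    · exact hs.2.2.1 (by rw [show m+4*k+3 = j by omega]; exact hyj)
  · intro hmod
    have h : j = m + 4 * ((j-m)/4) := by omega
    rw [h]; exact hfwd _

lemma count_tendsto (y : ℕ → Fin 3) (m : ℕ) (hm2 : 2 ≤ m) (hm5 : m ≤ 5)
    (hiff : ∀ j, m ≤ j → (y j = 2 ↔ (j - m) % 4 = 0)) :
    Filter.Tendsto
      (fun n : ℕ => (((Finset.Icc 1 n).filter (fun j => y j = 2)).card : ℝ) / n)
      Filter.atTop (nhds (1/4)) := by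
  have key : ∀ n, m ≤ n →
      (n - m)/4 + 1 ≤ ((Finset.Icc 1 n).filter (fun j => y j = 2)).card ∧
      ((Finset.Icc 1 n).filter (fun j => y j = 2)).card ≤ (m - 1) + ((n - m)/4 + 1) := by
    intro n hn
    have hinj : Function.Injective (fun k : ℕ => m + 4 * k) := by
      intro a b hab; simp only at hab; omega
    have hsub : (Finset.range ((n - m)/4 + 1)).image (fun k => m + 4 * k) ⊆
        (Finset.Icc 1 n).filter (fun j => y j = 2) := by
      intro j hj
      simp only [Finset.mem_image, Finset.mem_range] at hj
      obtain ⟨k, hk, rfl⟩ := hj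
      simp only [Finset.mem_filter, Finset.mem_Icc]
      exact ⟨⟨by omega, by omega⟩, (hiff _ (by omega)).2 (by omega)⟩
    have hsub2 : (Finset.Icc 1 n).filter (fun j => y j = 2) ⊆
        Finset.Icc 1 (m-1) ∪ (Finset.range ((n - m)/4 + 1)).image (fun k => m + 4 * k) := by
      intro j hj
      simp only [Finset.mem_filter, Finset.mem_Icc] at hj
      obtain ⟨⟨h1, h2⟩, h3⟩ := hj
      rcases lt_or_ge j m with h | h
      · exact Finset.mem_union_left _ (by simp only [Finset.mem_Icc]; omega)
      · refine Finset.mem_union_right _ ?_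
        have h4 := (hiff j h).1 h3
        simp only [Finset.mem_image, Finset.mem_range]
        exact ⟨(j - m)/4, by omega, by omega⟩
    constructor
    · calc (n-m)/4 + 1
          = ((Finset.range ((n - m)/4 + 1)).image (fun k => m + 4 * k)).card := by
            rw [Finset.card_image_of_injective _ hinj, Finset.card_range]
        _ ≤ _ := Finset.card_le_card hsub
    · calc ((Finset.Icc 1 n).filter (fun j => y j = 2)).card
          ≤ (Finset.Icc 1 (m-1) ∪
              (Finset.range ((n - m)/4 + 1)).image (fun k => m + 4 * k)).card :=
            Finset.card_le_card hsub2
        _ ≤ (Finset.Icc 1 (m-1)).card +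
              ((Finset.range ((n - m)/4 + 1)).image (fun k => m + 4 * k)).card :=
            Finset.card_union_le _ _
        _ ≤ (m - 1) + ((n - m)/4 + 1) := by
            rw [Nat.card_Icc]
            exact Nat.add_le_add (by omega)
              (le_trans (Finset.card_image_le) (by rw [Finset.card_range]))
  have bounds : ∀ n : ℕ, 5 ≤ n →
      (1/4 - 8/(n:ℝ)) ≤ (((Finset.Icc 1 n).filter (fun j => y j = 2)).card : ℝ) / n ∧
      (((Finset.Icc 1 n).filter (fun j => y j = 2)).card : ℝ) / n ≤ 1/4 + 8/n := by
    intro n hn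
    obtain ⟨hL, hU⟩ := key n (by omega)
    set cn := ((Finset.Icc 1 n).filter (fun j => y j = 2)).card with hcn
    have h1 : n ≤ 4 * cn + 8 := by omega
    have h2 : 4 * cn ≤ n + 20 := by omega
    have h1' : (n : ℝ) ≤ 4 * cn + 8 := by exact_mod_cast h1
    have h2' : (4 : ℝ) * cn ≤ n + 20 := by exact_mod_cast h2
    have hn0 : (0 : ℝ) < n := by exact_mod_cast (by omega : 0 < n)
    have e : (8 / (n:ℝ)) * n = 8 := div_mul_cancel₀ _ hn0.ne'
    constructor
    · rw [le_div_iff₀ hn0, sub_mul, e]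
      linarith
    · rw [div_le_iff₀ hn0, add_mul, e]
      linarith
  have hg : Filter.Tendsto (fun n : ℕ => (1/4 - 8/(n:ℝ))) Filter.atTop (nhds (1/4)) := by
    simpa using tendsto_const_nhds.sub (tendsto_const_div_atTop_nhds_zero_nat (8:ℝ))
  have hh : Filter.Tendsto (fun n : ℕ => (1/4 + 8/(n:ℝ))) Filter.atTop (nhds (1/4)) := by
    simpa using tendsto_const_nhds.add (tendsto_const_div_atTop_nhds_zero_nat (8:ℝ))
  exact tendsto_of_tendsto_of_tendsto_of_le_of_le' hg hh
    (Filter.eventually_atTop.2 ⟨5, fun n hn => (bounds n hn).1⟩)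
    (Filter.eventually_atTop.2 ⟨5, fun n hn => (bounds n hn).2⟩)

noncomputable def extQ (n : ℕ) (v : Fin n → Fin 3) : ℕ → Fin 3 :=
  fun i => if h : i < n then v ⟨i, h⟩ else 0

lemma extQ_eq (n : ℕ) (v : Fin n → Fin 3) (i : ℕ) (h : i < n) : extQ n v i = v ⟨i, h⟩ :=
  dif_pos h

lemma cylZero {Ω : Type*} [MeasurableSpace Ω] (μ : Measure Ω) (X : ℕ → Ω → Fin 3)
    (ε : ℝ) (c : List (Fin 3) → List (Fin 3)) (hcompat : CompatibleQua μ X ε c)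
    (n : ℕ) (hn : 3 ≤ n) (x : ℕ → Fin 3) (a : Fin 3)
    (hsuf : ¬ [1,1] <:+ (List.range n).map x)
    (hp : pQua ε (c ((List.range n).map x)) a = 0) :
    μ ({ω | X n ω = a} ∩ {ω | ∀ i < n, X i ω = x i}) = 0 := by
  rcases eq_zero_or_pos (μ {ω | ∀ i < n, X i ω = x i}) with h | h
  · exact le_antisymm (le_trans (measure_mono Set.inter_subset_right) h.le) (zero_le)
  · rw [hcompat n hn x hsuf h a, hp, ENNReal.ofReal_zero, zero_mul]

lemma pcontext1 (ε : ℝ) (c : List (Fin 3) → List (Fin 3))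
    (hc : ∀ v : List (Fin 3), 3 ≤ v.length → ¬ ([1,1] <:+ v) → c v ∈ tauQua ∧ c v <:+ v)
    (x : ℕ → Fin 3) (k : ℕ) (h2 : x (k+2) = 1) (h1 : x (k+1) ≠ 1) :
    pQua ε (c ((List.range (k+3)).map x)) 1 = 0 := by
  have hns : ¬ [1,1] <:+ (List.range (k+3)).map x := by
    rw [suffix11_iff]; tauto
  obtain ⟨hmem, hsufl⟩ := hc _ (by rw [List.length_map, List.length_range]; omega) hns
  generalize hgen : c ((List.range (k+3)).map x) = w at hmem hsufl ⊢
  rw [map_decomp] at hsufl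
  simp only [tauQua, Finset.mem_insert, Finset.mem_singleton] at hmem
  rcases hmem with h | h | h | h | h | h | h | h <;> subst h
  · obtain ⟨_, _, e3⟩ := triple_suffix (suffix3 hsufl (by simp))
    rw [h2] at e3; exact absurd e3 (by decide)
  · obtain ⟨_, _, e3⟩ := triple_suffix (suffix3 hsufl (by simp))
    rw [h2] at e3; exact absurd e3 (by decide)
  · obtain ⟨_, _, e3⟩ := triple_suffix (suffix3 hsufl (by simp))
    rw [h2] at e3; exact absurd e3 (by decide)
  · obtain ⟨_, e2⟩ := pair_suffix (suffix3 hsufl (by simp))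
    rw [h2] at e2; exact absurd e2 (by decide)
  · obtain ⟨_, e2⟩ := pair_suffix (suffix3 hsufl (by simp))
    rw [h2] at e2; exact absurd e2 (by decide)
  · simp [pQua]
  · simp [pQua]
  · have e1 := single_suffix (suffix3 hsufl (by simp))
    rw [h2] at e1; exact absurd e1 (by decide)

lemma bad11 {Ω : Type*} [MeasurableSpace Ω] (μ : Measure Ω) (X : ℕ → Ω → Fin 3)
    (ε : ℝ) (c : List (Fin 3) → List (Fin 3))
    (hc : ∀ v : List (Fin 3), 3 ≤ v.length → ¬ ([1,1] <:+ v) → c v ∈ tauQua ∧ c v <:+ v)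
    (hcompat : CompatibleQua μ X ε c)
    (h01 : μ {ω | X 0 ω = 1 ∧ X 1 ω = 1} = 0)
    (h12 : μ {ω | X 1 ω = 1 ∧ X 2 ω = 1} = 0) :
    ∀ n, μ {ω | X n ω = 1 ∧ X (n+1) ω = 1} = 0 := by
  intro n
  induction n using Nat.strong_induction_on with
  | _ n ih =>
    match n, ih with
    | 0, _ => exact h01
    | 1, _ => exact h12
    | (k+2), ih =>
      have hprev := ih (k+1) (by omega)
      have hU : μ (⋃ (v : Fin (k+3) → Fin 3),
          ⋃ (_ : extQ (k+3) v (k+1) ≠ 1 ∧ extQ (k+3) v (k+2) = 1),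
          ({ω | X (k+3) ω = 1} ∩ {ω | ∀ i < k+3, X i ω = extQ (k+3) v i})) = 0 := by
        refine measure_iUnion_null fun v => measure_iUnion_null fun hv => ?_
        refine cylZero μ X ε c hcompat (k+3) (by omega) _ 1 ?_ ?_
        · rw [suffix11_iff]; tauto
        · exact pcontext1 ε c hc _ k hv.2 hv.1
      have hsub : {ω | X (k+2) ω = 1 ∧ X (k+2+1) ω = 1} ⊆
          {ω | X (k+1) ω = 1 ∧ X (k+1+1) ω = 1} ∪
          (⋃ (v : Fin (k+3) → Fin 3),
            ⋃ (_ : extQ (k+3) v (k+1) ≠ 1 ∧ extQ (k+3) v (k+2) = 1),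
            ({ω | X (k+3) ω = 1} ∩ {ω | ∀ i < k+3, X i ω = extQ (k+3) v i})) := by
        intro ω hω
        obtain ⟨hω1, hω2⟩ := hω
        rcases em (X (k+1) ω = 1) with h | h
        · exact Or.inl ⟨h, hω1⟩
        · refine Or.inr (Set.mem_iUnion.2 ⟨fun i => X i.1 ω,
            Set.mem_iUnion.2 ⟨⟨?_, ?_⟩, ?_, ?_⟩⟩)
          · rw [extQ_eq _ _ _ (by omega)]; exact h
          · rw [extQ_eq _ _ _ (by omega)]; exact hω1
          · exact hω2
          · intro i hi; rw [extQ_eq _ _ _ hi]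
      refine le_antisymm ?_ (zero_le)
      calc μ {ω | X (k+2) ω = 1 ∧ X (k+2+1) ω = 1}
          ≤ _ := measure_mono hsub
        _ ≤ μ {ω | X (k+1) ω = 1 ∧ X (k+1+1) ω = 1} + _ := measure_union_le _ _
        _ = 0 := by rw [hprev, hU, add_zero]

lemma badP {Ω : Type*} [MeasurableSpace Ω] (μ : Measure Ω) (X : ℕ → Ω → Fin 3)
    (ε : ℝ) (c : List (Fin 3) → List (Fin 3))
    (hcompat : CompatibleQua μ X ε c) (k : ℕ) :
    μ {ω | (∀ j, ¬(X j ω = 1 ∧ X (j+1) ω = 1)) ∧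
        pQua ε (c ((List.range (k+3)).map fun i => X i ω)) (X (k+3) ω) = 0} = 0 := by
  have hU : μ (⋃ (a : Fin 3), ⋃ (v : Fin (k+3) → Fin 3),
      ⋃ (_ : ¬ [1,1] <:+ (List.range (k+3)).map (extQ (k+3) v) ∧
             pQua ε (c ((List.range (k+3)).map (extQ (k+3) v))) a = 0),
      ({ω | X (k+3) ω = a} ∩ {ω | ∀ i < k+3, X i ω = extQ (k+3) v i})) = 0 := by
    refine measure_iUnion_null fun a => measure_iUnion_null fun v =>
      measure_iUnion_null fun hv => ?_
    exact cylZero μ X ε c hcompat (k+3) (by omega) _ a hv.1 hv.2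
  refine le_antisymm (le_trans (measure_mono ?_) hU.le) (zero_le)
  intro ω hω
  obtain ⟨h11ω, hpω⟩ := hω
  have hmapeq : (List.range (k+3)).map (extQ (k+3) (fun i : Fin (k+3) => X i.1 ω)) =
      (List.range (k+3)).map (fun i => X i ω) :=
    List.map_congr_left (fun i hi => by rw [extQ_eq _ _ _ (List.mem_range.1 hi)])
  refine Set.mem_iUnion.2 ⟨X (k+3) ω, Set.mem_iUnion.2 ⟨fun i => X i.1 ω,
    Set.mem_iUnion.2 ⟨⟨?_, ?_⟩, rfl, ?_⟩⟩⟩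
  · rw [hmapeq, suffix11_iff]
    exact h11ω (k+1)
  · rw [hmapeq]; exact hpω
  · intro i hi; rw [extQ_eq _ _ _ hi]

theorem stmt14 {Ω : Type*} [MeasurableSpace Ω] (μ : Measure Ω) [IsProbabilityMeasure μ]
    (X : ℕ → Ω → Fin 3) (hX : ∀ n, Measurable (X n))
    (ε : ℝ) (hε0 : 0 ≤ ε) (hε1 : ε ≤ 1)
    (c : List (Fin 3) → List (Fin 3))
    (hc : ∀ v : List (Fin 3), 3 ≤ v.length → ¬ ([1,1] <:+ v) →
      c v ∈ tauQua ∧ c v <:+ v)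
    (hcompat : CompatibleQua μ X ε c)
    (h01 : μ {ω | X 0 ω = 1 ∧ X 1 ω = 1} = 0)
    (h12 : μ {ω | X 1 ω = 1 ∧ X 2 ω = 1} = 0) :
    ∀ᵐ ω ∂μ, Filter.Tendsto
      (fun n : ℕ => (((Finset.Icc 1 n).filter (fun m => X m ω = 2)).card : ℝ) / n)
      Filter.atTop (nhds (1/4)) := by
  have hb11 := bad11 μ X ε c hc hcompat h01 h12
  have ae1 : ∀ᵐ ω ∂μ, ∀ j, ¬(X j ω = 1 ∧ X (j+1) ω = 1) := by
    have hU : μ (⋃ j, {ω | X j ω = 1 ∧ X (j+1) ω = 1}) = 0 := measure_iUnion_null hb11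
    rw [MeasureTheory.ae_iff]
    refine measure_mono_null ?_ hU
    intro ω hω
    simp only [Set.mem_setOf_eq, not_forall, not_not] at hω
    obtain ⟨j, hj⟩ := hω
    exact Set.mem_iUnion.2 ⟨j, hj⟩
  have ae2 : ∀ᵐ ω ∂μ, ¬ ((∀ j, ¬(X j ω = 1 ∧ X (j+1) ω = 1)) ∧
      ∃ k, pQua ε (c ((List.range (k+3)).map fun i => X i ω)) (X (k+3) ω) = 0) := by
    have hU : μ (⋃ k, {ω | (∀ j, ¬(X j ω = 1 ∧ X (j+1) ω = 1)) ∧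
        pQua ε (c ((List.range (k+3)).map fun i => X i ω)) (X (k+3) ω) = 0}) = 0 :=
      measure_iUnion_null (badP μ X ε c hcompat)
    rw [MeasureTheory.ae_iff]
    refine measure_mono_null ?_ hU
    intro ω hω
    simp only [Set.mem_setOf_eq, not_not] at hω
    obtain ⟨h1, k, hk⟩ := hω
    exact Set.mem_iUnion.2 ⟨k, h1, hk⟩
  filter_upwards [ae1, ae2] with ω h11ω h2ω
  have hp : ∀ n, 3 ≤ n →
      pQua ε (c ((List.range n).map (fun i => X i ω))) (X n ω) ≠ 0 := by
    intro n hn hzero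
    obtain ⟨k, rfl⟩ : ∃ k, n = k + 3 := ⟨n - 3, by omega⟩
    exact h2ω ⟨h11ω, ⟨k, hzero⟩⟩
  have hA : ∀ k, allowedQ (X k ω) (X (k+1) ω) (X (k+2) ω) (X (k+3) ω) :=
    stepAllowed ε c hc (fun n => X n ω) h11ω hp
  have hD2 : ∀ j, X (j+2) ω = 2 →
      X (j+3) ω ≠ 2 ∧ X (j+4) ω ≠ 2 ∧ X (j+5) ω ≠ 2 ∧ X (j+6) ω = 2 := by
    intro j h
    exact d2aux (X j ω) (X (j+1) ω) (X (j+2) ω) (X (j+3) ω) (X (j+4) ω)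
      (X (j+5) ω) (X (j+6) ω) h (hA j) (hA (j+1)) (hA (j+2)) (hA (j+3))
  obtain ⟨m, hm2, hm5, hym⟩ : ∃ m, 2 ≤ m ∧ m ≤ 5 ∧ X m ω = 2 := by
    rcases d1aux (X 0 ω) (X 1 ω) (X 2 ω) (X 3 ω) (X 4 ω) (X 5 ω)
      (h11ω 1) (hA 0) (hA 1) (hA 2) with h | h | h | h
    · exact ⟨2, by omega, by omega, h⟩
    · exact ⟨3, by omega, by omega, h⟩
    · exact ⟨4, by omega, by omega, h⟩
    · exact ⟨5, by omega, by omega, h⟩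
  exact count_tendsto (fun n => X n ω) m hm2 hm5
    (buildIff (fun n => X n ω) hD2 m hm2 hym)
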